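/- arXiv:math/0701232 — 2 statements merged into one kernel-verified Lean document; each statement's English description precedes it below -/
import Mathlib

section
/- A positive integer n has no even decompositions (equivalently, lspec(n) contains no even element) if and only if n = 2^α · k for some integer α ≥ 0 and odd positive integer k with 2^(α+1) > k. -/
/-- The length spectrum of `n`: the set of lengths `l` of decompositions of `n`,
i.e. sequences `a, a+1, ..., a+(l-1)` of `l ≥ 1` consecutive positive integers summing to `n`. -/
def lspec (n : ℕ) : Set ℕ :=
  {l | 0 < l ∧ ∃ a : ℕ, 0 < a ∧ ∑ i ∈ Finset.range l, (a + i) = n}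

/-- `A₀`: the even elements of `A`. -/
def evens (A : Set ℕ) : Set ℕ := {x ∈ A | Even x}

/-- `A₁`: the odd elements of `A`. -/
def odds (A : Set ℕ) : Set ℕ := {x ∈ A | Odd x}

/-- The spectral class of `n`: positive integers with the same length spectrum as `n`. -/
def specClass (n : ℕ) : Set ℕ := {m | 0 < m ∧ lspec m = lspec n}

/-- A set is balanced if it has equally many even and odd elements. -/
def balancedSet (S : Set ℕ) : Prop := (evens S).encard = (odds S).encard

/-- A set is unmixed if it has no even elements. -/
def unmixedSet (S : Set ℕ) : Prop := evens S = ∅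

/-- A set is lopsided if it is neither balanced nor unmixed. -/
def lopsidedSet (S : Set ℕ) : Prop := ¬ balancedSet S ∧ ¬ unmixedSet S

/-- The set of ratios `m'/m` over pairs of complementary factors `m ≤ m'` of `k`;
`q(k)` is the least element of this set. -/
def qSet (k : ℕ) : Set ℚ :=
  {r | ∃ m m' : ℕ, 0 < m ∧ m ≤ m' ∧ m * m' = k ∧ r = (m' : ℚ) / (m : ℚ)}

/-- The exceptional set `E(S)`: numbers `a = b·c` with `b, c ∈ S₁`, `a > max S₀`, and
whose set of divisors of `(max S₁)·a` strictly below `a` is exactly `S₁`. -/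
def excSet (S : Set ℕ) : Set ℕ :=
  {a | (∃ b ∈ odds S, ∃ c ∈ odds S, a = b * c) ∧ sSup (evens S) < a ∧
    {d | d ∣ sSup (odds S) * a ∧ d < a} = odds S}

/-- `P(S)`: the primes strictly greater than `max S₀`. -/
def primesAbove (S : Set ℕ) : Set ℕ := {p | p.Prime ∧ sSup (evens S) < p}

/-- A balanced spectrum is non-excessive if `S₁` is exactly the set of divisors of `max S₁`. -/
def nonExcessive (S : Set ℕ) : Prop := odds S = {d | d ∣ sSup (odds S)}

/-- `γ_p`: the largest `k` with `p^k ∈ S₁`. -/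
noncomputable def gammaIdx (S : Set ℕ) (p : ℕ) : ℕ := sSup {k | p ^ k ∈ odds S}

/-- `μ_p = v_p(max S₁)`. -/
noncomputable def muIdx (S : Set ℕ) (p : ℕ) : ℕ := (sSup (odds S)).factorization p

/-- The excessive index `ε_p = γ_p − μ_p` of a prime `p` with respect to `S`. -/
noncomputable def excIdx (S : Set ℕ) (p : ℕ) : ℕ := gammaIdx S p - muIdx S p

/-- The difference set `D(S)`: `S₁` with its `|S₀|` smallest elements removed when
`|S₀| ≤ |S₁|`, and empty otherwise.  An element `x` of `S₁` survives exactly when at least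
`|S₀|` elements of `S₁` lie strictly below it. -/
def diffSet (S : Set ℕ) : Set ℕ :=
  {x ∈ odds S | (evens S).encard ≤ {y ∈ odds S | y < x}.encard}

/-! A decomposition of `n` of length `l` with first term `a` is the same thing as a factorization
`2n = l · m` with `m = 2a + l - 1`, i.e. with `l < m` of opposite parity. For `n = 2^α k` with `k`
odd, an even `l` must then absorb the whole power `2^(α+1)`, so `2^(α+1) ≤ l < k`; conversely,
if `2^(α+1) < k` then `l = 2^(α+1)`, `m = k` is such a factorization. -/

theorem two_mul_sum_range_add (l a : ℕ) :
    2 * ∑ i ∈ Finset.range l, (a + i) = l * (2 * a + l - 1) := by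
  have hid := Finset.sum_range_id_mul_two l
  rw [Finset.sum_add_distrib, Finset.sum_const, Finset.card_range, smul_eq_mul]
  rcases l with _ | l
  · simp
  · rw [Nat.add_sub_cancel] at hid
    rw [show 2 * a + (l + 1) - 1 = 2 * a + l by omega]
    linear_combination hid

theorem mem_lspec_iff {n l : ℕ} :
    l ∈ lspec n ↔ 0 < l ∧ ∃ m, l < m ∧ Odd (l + m) ∧ l * m = 2 * n := by
  constructor
  · rintro ⟨hl, a, ha, hsum⟩
    refine ⟨hl, 2 * a + l - 1, by omega, ⟨a + l - 1, by omega⟩, ?_⟩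
    rw [← two_mul_sum_range_add, hsum]
  · rintro ⟨hl, m, hlm, ⟨t, ht⟩, hmul⟩
    refine ⟨hl, t + 1 - l, by omega, ?_⟩
    rw [← Nat.mul_left_cancel_iff two_pos, two_mul_sum_range_add, ← hmul]
    congr 1
    omega

theorem exists_even_mem_lspec_iff {α k : ℕ} (hk : Odd k) :
    (∃ l ∈ lspec (2 ^ α * k), Even l) ↔ 2 ^ (α + 1) < k := by
  have htwo : 2 * (2 ^ α * k) = 2 ^ (α + 1) * k := by ring
  have hpow_even : Even (2 ^ (α + 1)) := (Nat.even_pow' α.succ_ne_zero).mpr even_two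
  constructor
  · rintro ⟨l, hl, hl_even⟩
    obtain ⟨hl_pos, m, hlm, hlm_odd, hmul⟩ := mem_lspec_iff.mp hl
    rw [htwo] at hmul
    have hm : Odd m := (Nat.odd_add'.mp hlm_odd).mpr hl_even
    have hdvd : 2 ^ (α + 1) ∣ l :=
      ((Nat.coprime_two_left.mpr hm).pow_left _).dvd_of_dvd_mul_right ⟨k, hmul⟩
    have hlk : l < k := by
      have : l * l < l * k := calc
        l * l < l * m := Nat.mul_lt_mul_of_pos_left hlm hl_pos
        _ = 2 ^ (α + 1) * k := hmul
        _ ≤ l * k := Nat.mul_le_mul_right k (Nat.le_of_dvd hl_pos hdvd)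
      exact Nat.lt_of_mul_lt_mul_left this
    exact (Nat.le_of_dvd hl_pos hdvd).trans_lt hlk
  · intro hlt
    exact ⟨2 ^ (α + 1),
      mem_lspec_iff.mpr ⟨by positivity, k, hlt, hpow_even.add_odd hk, htwo.symm⟩, hpow_even⟩

/-- `n` has no even decompositions iff `n = 2^α · k` with `k` odd and `2^(α+1) > k`. -/
theorem unmixed_iff (n : ℕ) (hn : 0 < n) :
    evens (lspec n) = ∅ ↔
      ∃ α k : ℕ, Odd k ∧ 0 < k ∧ n = 2 ^ α * k ∧ k < 2 ^ (α + 1) := by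
  have hevens : evens (lspec n) = ∅ ↔ ¬ ∃ l ∈ lspec n, Even l := by
    simp [evens, Set.eq_empty_iff_forall_notMem]
  rw [hevens]
  constructor
  · intro h
    obtain ⟨α, k, hk, rfl⟩ := Nat.exists_eq_two_pow_mul_odd hn.ne'
    refine ⟨α, k, hk, hk.pos, rfl, ?_⟩
    rw [exists_even_mem_lspec_iff hk, not_lt] at h
    refine h.lt_of_ne fun heq => Nat.not_even_iff_odd.mpr hk ?_
    exact heq ▸ (Nat.even_pow' α.succ_ne_zero).mpr even_two
  · rintro ⟨α, k, hk, -, rfl, hlt⟩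
    rw [exists_even_mem_lspec_iff hk, not_lt]
    exact hlt.le
end

section
/- Let n be a positive integer such that S = lspec(n) is balanced and non-excessive, and let m₀ = max S₀. Then L(n) = (m₀/2)·(P(S) ∪ E(S)). -/
lemma sum_consec (b l : ℕ) : 2 * ∑ i ∈ Finset.range l, (b + 1 + i) = l * (2*b + l + 1) := by
  have h1 : ∑ i ∈ Finset.range l, (b + 1 + i) = l * (b+1) + ∑ i ∈ Finset.range l, i := by
    rw [Finset.sum_add_distrib, Finset.sum_const, Finset.card_range, smul_eq_mul]
  cases l with
  | zero => simp
  | succ k =>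
    rw [h1, Nat.mul_add, Nat.mul_comm 2 (∑ i ∈ Finset.range (k+1), i),
      Finset.sum_range_id_mul_two]
    simp only [Nat.add_sub_cancel]
    ring

lemma mem_lspec {n l : ℕ} (hn : 0 < n) :
    l ∈ lspec n ↔ ∃ m, l * m = 2 * n ∧ l < m ∧ Odd (l + m) := by
  constructor
  · rintro ⟨hl, a, ha, hsum⟩
    obtain ⟨b, rfl⟩ : ∃ b, a = b + 1 := ⟨a - 1, by omega⟩
    refine ⟨2*b + l + 1, by rw [← hsum, ← sum_consec], by omega, ?_⟩
    exact ⟨b + l, by ring⟩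
  · rintro ⟨m, hm, hlt, hodd⟩
    have hl : 0 < l := by
      rcases Nat.eq_zero_or_pos l with h | h
      · subst h; simp at hm; omega
      · exact h
    rw [Nat.odd_iff] at hodd
    obtain ⟨b, hb⟩ : ∃ b, m = 2*b + l + 1 := ⟨(m - l - 1)/2, by omega⟩
    subst hb
    refine ⟨hl, b + 1, by omega, ?_⟩
    have := sum_consec b l
    omega

lemma odd_of_dvd_odd {d x : ℕ} (hx : Odd x) (h : d ∣ x) : Odd d := by
  rcases Nat.even_or_odd d with he | ho
  · exfalso
    have h2 : (2:ℕ) ∣ x := dvd_trans (even_iff_two_dvd.mp he) h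
    rw [Nat.odd_iff] at hx
    omega
  · exact ho

lemma odds_lspec {n : ℕ} (hn : 0 < n) :
    odds (lspec n) = {d | Odd d ∧ d ∣ n ∧ d^2 < 2*n} := by
  ext l
  simp only [odds, Set.mem_setOf_eq, Set.mem_sep_iff]
  constructor
  · rintro ⟨hl, hodd⟩
    obtain ⟨m, hm, hlt, _⟩ := (mem_lspec hn).mp hl
    have hl0 : 0 < l := hodd.pos
    have hldvd : l ∣ n :=
      Nat.Coprime.dvd_of_dvd_mul_left hodd.coprime_two_right ⟨m, hm.symm⟩
    refine ⟨hodd, hldvd, ?_⟩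
    calc l^2 = l * l := sq l
    _ < l * m := (Nat.mul_lt_mul_left hl0).mpr hlt
    _ = 2 * n := hm
  · rintro ⟨hodd, hdvd, hsq⟩
    have hl0 : 0 < l := hodd.pos
    have hc : l * (n / l) = n := Nat.mul_div_cancel' hdvd
    have hc2 : l * (2 * (n / l)) = 2 * n := by rw [Nat.mul_left_comm, hc]
    refine ⟨(mem_lspec hn).mpr ⟨2 * (n / l), hc2, ?_, ?_⟩, hodd⟩
    · have : l * l < l * (2 * (n/l)) := by
        rw [hc2, ← sq]; exact hsq
      exact Nat.lt_of_mul_lt_mul_left this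
    · exact hodd.add_even (even_two_mul _)

lemma evens_lspec' {n : ℕ} (hn : 0 < n) :
    evens (lspec n) = {l | ∃ d, Odd d ∧ d ∣ n ∧ l * d = 2*n ∧ 2*n < d^2} := by
  ext l
  simp only [evens, Set.mem_setOf_eq, Set.mem_sep_iff]
  constructor
  · rintro ⟨hl, heven⟩
    obtain ⟨m, hm, hlt, hodd⟩ := (mem_lspec hn).mp hl
    have hmodd : Odd m := by
      rw [Nat.odd_iff] at hodd ⊢; rw [Nat.even_iff] at heven; omega
    have hmdvd : m ∣ n :=
      Nat.Coprime.dvd_of_dvd_mul_left hmodd.coprime_two_right ⟨l, by rw [← hm]; ring⟩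
    have hm0 : 0 < m := hmodd.pos
    refine ⟨m, hmodd, hmdvd, hm, ?_⟩
    calc 2*n = l * m := hm.symm
    _ < m * m := (Nat.mul_lt_mul_right hm0).mpr hlt
    _ = m^2 := (sq m).symm
  · rintro ⟨d, hdodd, hddvd, hld, hsq⟩
    have hd0 : 0 < d := hdodd.pos
    have hlev : Even l := by
      rcases Nat.even_mul.mp (by rw [hld]; exact even_two_mul n) with h | h
      · exact h
      · exact absurd h (Nat.not_even_iff_odd.mpr hdodd)
    have hlt : l < d := by
      have : l * d < d * d := by rw [hld, ← sq]; exact hsq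
      exact Nat.lt_of_mul_lt_mul_right this
    exact ⟨(mem_lspec hn).mpr ⟨d, hld, hlt, hlev.add_odd hdodd⟩, hlev⟩

lemma ordCompl_two_odd {n : ℕ} (hn : 0 < n) : Odd (ordCompl[2] n) := by
  exact Nat.odd_iff.mpr (Nat.two_dvd_ne_zero.mp (Nat.not_dvd_ordCompl Nat.prime_two hn.ne'))

lemma odd_dvd_ordCompl {d n : ℕ} (hn : 0 < n) (hd : Odd d) (h : d ∣ n) :
    d ∣ ordCompl[2] n := by
  have hself : ordProj[2] n * ordCompl[2] n = n := Nat.ordProj_mul_ordCompl_eq_self n 2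
  have hcop : d.Coprime (2 ^ n.factorization 2) := Nat.Coprime.pow_right _ hd.coprime_two_right
  exact Nat.Coprime.dvd_of_dvd_mul_left hcop (by rw [hself]; exact h)

lemma fact2_of_odd {x : ℕ} (hx : Odd x) (e : ℕ) : (2^e * x).factorization 2 = e := by
  have hx0 : x ≠ 0 := hx.pos.ne'
  rw [Nat.factorization_mul (by positivity) hx0]
  simp only [Finsupp.coe_add, Pi.add_apply]
  rw [Nat.Prime.factorization_pow Nat.prime_two]
  rw [Nat.factorization_eq_zero_of_not_dvd (by rw [Nat.two_dvd_ne_zero, Nat.odd_iff.mp hx])]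
  simp

lemma ordCompl_two_mul {x : ℕ} (hx : Odd x) (e : ℕ) : ordCompl[2] (2^e * x) = x := by
  rw [fact2_of_odd hx e]
  exact Nat.mul_div_cancel_left x (by positivity)

lemma evens_image_general {n T q : ℕ} (hq : Odd q) (hTq : T * q = 2 * n) (hT0 : 0 < T)
    (hqmax : ∀ d, Odd d → d ∣ n → d ∣ q) (hqdvd : q ∣ n) :
    {l | ∃ d, Odd d ∧ d ∣ n ∧ l * d = 2*n ∧ 2*n < d^2} =
      (fun d => T * d) '' {d | d ∣ n ∧ Odd d ∧ (T*d)^2 < 2*n} := by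
  ext l
  simp only [Set.mem_setOf_eq, Set.mem_image]
  constructor
  · rintro ⟨d, hdodd, hddvd, hld, hsq⟩
    have hd0 : 0 < d := hdodd.pos
    obtain ⟨d', hdd'⟩ : d ∣ q := hqmax d hdodd hddvd
    have hd'odd : Odd d' := odd_of_dvd_odd hq ⟨d, by rw [hdd']; ring⟩
    have hd'0 : 0 < d' := hd'odd.pos
    have hl : l = T * d' := by
      have h1 : l * d = (T * d') * d := by rw [hld, ← hTq, hdd']; ring
      exact Nat.eq_of_mul_eq_mul_right hd0 h1
    have hlt : T * d' < d := by
      have h1 : (T * d') * d < d * d := by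
        calc (T * d') * d = 2 * n := by rw [← hTq, hdd']; ring
        _ < d^2 := hsq
        _ = d * d := sq d
      exact Nat.lt_of_mul_lt_mul_right h1
    refine ⟨d', ⟨dvd_trans ⟨d, by rw [hdd']; ring⟩ hqdvd, hd'odd, ?_⟩, hl.symm⟩
    calc (T * d')^2 = (T * d') * (T * d') := sq _
    _ < (T * d') * d := (Nat.mul_lt_mul_left (by positivity)).mpr hlt
    _ = 2 * n := by rw [← hTq, hdd']; ring
  · rintro ⟨d', ⟨hd'dvd, hd'odd, hsq⟩, hl⟩
    have hd'0 : 0 < d' := hd'odd.pos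
    obtain ⟨d, hdd'⟩ : d' ∣ q := hqmax d' hd'odd hd'dvd
    have hdodd : Odd d := odd_of_dvd_odd hq ⟨d', by rw [hdd']; ring⟩
    have hd0 : 0 < d := hdodd.pos
    have hld : l * d = 2 * n := by rw [← hl, ← hTq, hdd']; ring
    have hlt : T * d' < d := by
      have h1 : (T * d') * (T * d') < (T * d') * d := by
        calc (T * d') * (T * d') = (T*d')^2 := (sq _).symm
        _ < 2 * n := hsq
        _ = (T * d') * d := by rw [← hTq, hdd']; ring
      exact Nat.lt_of_mul_lt_mul_left h1
    refine ⟨d, hdodd, dvd_trans ⟨d', by rw [hdd']; ring⟩ hqdvd, hld, ?_⟩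
    calc 2 * n = (T * d') * d := by rw [← hTq, hdd']; ring
    _ < d * d := (Nat.mul_lt_mul_right hd0).mpr hlt
    _ = d^2 := (sq d).symm

lemma evens_lspec_image {n : ℕ} (hn : 0 < n) :
    evens (lspec n) = (fun d => 2 * 2^(n.factorization 2) * d) ''
      {d | d ∣ n ∧ Odd d ∧ (2 * 2^(n.factorization 2) * d)^2 < 2*n} := by
  rw [evens_lspec' hn]
  exact evens_image_general (ordCompl_two_odd hn)
    (by rw [mul_assoc, Nat.ordProj_mul_ordCompl_eq_self n 2]) (by positivity)
    (fun d hd hdn => odd_dvd_ordCompl hn hd hdn) (Nat.ordCompl_dvd n 2)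

lemma evens_union_odds (S : Set ℕ) : evens S ∪ odds S = S := by
  ext x
  simp only [evens, odds, Set.mem_union, Set.mem_sep_iff]
  constructor
  · rintro (⟨h, _⟩ | ⟨h, _⟩) <;> exact h
  · intro h
    rcases Nat.even_or_odd x with he | ho
    · exact Or.inl ⟨h, he⟩
    · exact Or.inr ⟨h, ho⟩

lemma lspec_eq_aux {n e T m₁ a : ℕ} (hT : T = 2 * 2^e)
    (hm₁odd : Odd m₁) (hm₁0 : 0 < m₁) (haodd : Odd a) (ha0 : 0 < a)
    (hgt : T * m₁ < a)
    (hsmall : ∀ d, d ∣ m₁ * a → d^2 < T * (m₁ * a) → d ∣ m₁)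
    (hodds : odds (lspec n) = {d | d ∣ m₁})
    (hevs : evens (lspec n) = (fun d => T * d) '' {d | d ∣ m₁}) :
    lspec (2^e * (m₁ * a)) = lspec n := by
  have hT0 : 0 < T := by rw [hT]; positivity
  have hma_odd : Odd (m₁ * a) := hm₁odd.mul haodd
  have hma0 : 0 < m₁ * a := by positivity
  have hm0 : 0 < 2^e * (m₁ * a) := by positivity
  have hfact : (2^e * (m₁ * a)).factorization 2 = e := fact2_of_odd hma_odd e
  have h2m : 2 * (2^e * (m₁ * a)) = T * (m₁ * a) := by rw [hT]; ring
  have hma_dvd : m₁ * a ∣ 2^e * (m₁ * a) := dvd_mul_left _ _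
  have hm₁lta : m₁ < a := lt_of_le_of_lt (Nat.le_mul_of_pos_left m₁ (by omega)) hgt
  -- odds
  have ho : odds (lspec (2^e * (m₁ * a))) = {d | d ∣ m₁} := by
    rw [odds_lspec hm0]
    ext d
    simp only [Set.mem_setOf_eq]
    constructor
    · rintro ⟨hdodd, hddvd, hdsq⟩
      have hdq : d ∣ m₁ * a := by
        have := odd_dvd_ordCompl hm0 hdodd hddvd
        rwa [ordCompl_two_mul hma_odd e] at this
      exact hsmall d hdq (by rwa [h2m] at hdsq)
    · intro hd
      have hdodd : Odd d := odd_of_dvd_odd hm₁odd hd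
      have hdle : d ≤ m₁ := Nat.le_of_dvd hm₁0 hd
      refine ⟨hdodd, dvd_trans (dvd_trans hd (dvd_mul_right m₁ a)) hma_dvd, ?_⟩
      rw [h2m]
      calc d^2 = d * d := sq d
      _ ≤ m₁ * m₁ := Nat.mul_le_mul hdle hdle
      _ ≤ (T * m₁) * m₁ := Nat.mul_le_mul_right m₁ (Nat.le_mul_of_pos_left m₁ hT0)
      _ < (T * m₁) * a := by
          exact (Nat.mul_lt_mul_left (by positivity)).mpr hm₁lta
      _ = T * (m₁ * a) := by ring
  -- evens
  have hev : evens (lspec (2^e * (m₁ * a))) = evens (lspec n) := by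
    rw [evens_lspec_image hm0, hfact, ← hT, hevs]
    refine congrArg _ ?_
    ext d
    show (d ∣ 2^e*(m₁*a) ∧ Odd d ∧ (T*d)^2 < 2*(2^e*(m₁*a))) ↔ d ∣ m₁
    constructor
    · rintro ⟨hddvd, hdodd, hdsq⟩
      have hdq : d ∣ m₁ * a := by
        have := odd_dvd_ordCompl hm0 hdodd hddvd
        rwa [ordCompl_two_mul hma_odd e] at this
      refine hsmall d hdq ?_
      calc d^2 ≤ (T * d)^2 := Nat.pow_le_pow_left (Nat.le_mul_of_pos_left d hT0) 2
      _ < 2 * (2^e * (m₁ * a)) := hdsq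
      _ = T * (m₁ * a) := h2m
    · intro hd
      have hdle : d ≤ m₁ := Nat.le_of_dvd hm₁0 hd
      refine ⟨dvd_trans (dvd_trans hd (dvd_mul_right m₁ a)) hma_dvd,
        odd_of_dvd_odd hm₁odd hd, ?_⟩
      rw [h2m]
      calc (T*d)^2 ≤ (T*m₁)^2 := Nat.pow_le_pow_left (Nat.mul_le_mul_left T hdle) 2
      _ = (T*m₁) * (T*m₁) := sq _
      _ < (T*m₁) * a := (Nat.mul_lt_mul_left (by positivity)).mpr hgt
      _ = T * (m₁ * a) := by ring
  calc lspec (2^e * (m₁ * a))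
      = evens (lspec (2^e * (m₁ * a))) ∪ odds (lspec (2^e * (m₁ * a))) :=
        (evens_union_odds _).symm
  _ = evens (lspec n) ∪ odds (lspec n) := by rw [ho, hev, hodds]
  _ = lspec n := evens_union_odds _

/-- If `S = lspec n` is balanced and non-excessive, then `L(n) = (m₀/2)·(P(S) ∪ E(S))`. -/
theorem specClass_of_nonExcessive (n : ℕ) (hn : 0 < n) (hb : balancedSet (lspec n))
    (hne : nonExcessive (lspec n)) :
    specClass n =
      (fun a => sSup (evens (lspec n)) / 2 * a) ''
        (primesAbove (lspec n) ∪ excSet (lspec n)) := by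
  obtain ⟨T, hTdef⟩ : ∃ T, T = 2 * 2 ^ (n.factorization 2) := ⟨_, rfl⟩
  have hT0 : 0 < T := by rw [hTdef]; positivity
  have hT2 : 2 ≤ T := by
    rw [hTdef]
    have : 1 ≤ 2^(n.factorization 2) := Nat.one_le_two_pow
    omega
  obtain ⟨m₁, hm₁def⟩ : ∃ m, m = sSup (odds (lspec n)) := ⟨_, rfl⟩
  have hSdiv : odds (lspec n) = {d | d ∣ m₁} := by rw [hm₁def]; exact hne
  have hm₁mem : m₁ ∈ odds (lspec n) := by rw [hSdiv]; exact dvd_refl m₁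
  have hoc := odds_lspec hn
  have hm₁char : Odd m₁ ∧ m₁ ∣ n ∧ m₁^2 < 2*n := by rw [hoc] at hm₁mem; exact hm₁mem
  obtain ⟨hm₁odd, hm₁n, hm₁sq⟩ := hm₁char
  have hm₁0 : 0 < m₁ := hm₁odd.pos
  have hinj : Function.Injective (fun d : ℕ => T * d) := fun x y h => by
    simpa using Nat.eq_of_mul_eq_mul_left hT0 h
  have himg : evens (lspec n) = (fun d => T * d) '' {d | d ∣ n ∧ Odd d ∧ (T*d)^2 < 2*n} := by
    rw [hTdef]; exact evens_lspec_image hn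
  have hBsub : {d | d ∣ n ∧ Odd d ∧ (T*d)^2 < 2*n} ⊆ odds (lspec n) := by
    rintro d ⟨h1, h2, h3⟩
    rw [hoc]
    exact ⟨h2, h1, lt_of_le_of_lt (Nat.pow_le_pow_left (Nat.le_mul_of_pos_left d hT0) 2) h3⟩
  have hofin : (odds (lspec n)).Finite := by
    apply Set.Finite.subset (Set.finite_Icc 1 n)
    rintro d hd
    rw [hoc] at hd
    exact ⟨hd.1.pos, Nat.le_of_dvd hn hd.2.1⟩
  have hBeq : {d | d ∣ n ∧ Odd d ∧ (T*d)^2 < 2*n} = odds (lspec n) := by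
    apply Set.Finite.eq_of_subset_of_encard_le' hofin hBsub
    refine le_of_eq ?_
    calc (odds (lspec n)).encard = (evens (lspec n)).encard := hb.symm
    _ = {d | d ∣ n ∧ Odd d ∧ (T*d)^2 < 2*n}.encard := by
        rw [himg]; exact Set.InjOn.encard_image hinj.injOn
  have hBeq' : {d | d ∣ n ∧ Odd d ∧ (T*d)^2 < 2*n} = {d | d ∣ m₁} := hBeq.trans hSdiv
  have hevS : evens (lspec n) = (fun d => T * d) '' {d | d ∣ m₁} := by rw [himg, hBeq']
  have hm₁B : m₁ ∣ n ∧ Odd m₁ ∧ (T*m₁)^2 < 2*n := by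
    have : m₁ ∈ {d | d ∣ n ∧ Odd d ∧ (T*d)^2 < 2*n} := by rw [hBeq']; exact dvd_refl m₁
    exact this
  have hTm₁mem : T * m₁ ∈ evens (lspec n) := by rw [hevS]; exact ⟨m₁, dvd_refl m₁, rfl⟩
  have hub : ∀ l ∈ evens (lspec n), l ≤ T * m₁ := by
    intro l hl
    rw [hevS] at hl
    obtain ⟨d, hd, rfl⟩ := hl
    exact Nat.mul_le_mul_left T (Nat.le_of_dvd hm₁0 hd)
  have hm₀ : sSup (evens (lspec n)) = T * m₁ :=
    le_antisymm (csSup_le ⟨T*m₁, hTm₁mem⟩ hub) (le_csSup ⟨T*m₁, fun x hx => hub x hx⟩ hTm₁mem)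
  have hhalf : T * m₁ / 2 = 2^(n.factorization 2) * m₁ := by
    rw [hTdef, mul_assoc]
    exact Nat.mul_div_cancel_left _ (by norm_num)
  have hTm₁2 : 2 ≤ T * m₁ := le_trans hT2 (Nat.le_mul_of_pos_right T hm₁0)
  ext m
  simp only [specClass, Set.mem_setOf_eq, Set.mem_image, Set.mem_union]
  constructor
  · rintro ⟨hm0, hsp⟩
    have hoddm : odds (lspec m) = {d | d ∣ m₁} := by rw [hsp, hSdiv]
    have hevm : evens (lspec m) = evens (lspec n) := by rw [hsp]
    obtain ⟨Tf, hTfdef⟩ : ∃ t, t = 2 * 2 ^ (m.factorization 2) := ⟨_, rfl⟩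
    have himgm : evens (lspec m) = (fun d => Tf * d) '' {d | d ∣ m ∧ Odd d ∧ (Tf*d)^2 < 2*m} := by
      rw [hTfdef]; exact evens_lspec_image hm0
    have hTfT : Tf = T := by
      have hne' : ∃ d₀, d₀ ∈ {d | d ∣ m ∧ Odd d ∧ (Tf*d)^2 < 2*m} := by
        have hmem : T * m₁ ∈ evens (lspec m) := by rw [hevm]; exact hTm₁mem
        rw [himgm] at hmem
        obtain ⟨d₀, hd₀, _⟩ := hmem
        exact ⟨d₀, hd₀⟩
      obtain ⟨d₀, hd₀m, hd₀odd, hd₀sq⟩ := hne'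
      have h1B : (1:ℕ) ∈ {d | d ∣ m ∧ Odd d ∧ (Tf*d)^2 < 2*m} :=
        ⟨one_dvd m, odd_one,
          lt_of_le_of_lt (Nat.pow_le_pow_left (Nat.mul_le_mul_left Tf hd₀odd.pos) 2) hd₀sq⟩
      have hTfmem : Tf ∈ evens (lspec n) := by
        rw [← hevm, himgm]
        exact ⟨1, h1B, mul_one Tf⟩
      rw [hevS] at hTfmem
      obtain ⟨d, hd, hTd⟩ := hTfmem
      have hdodd : Odd d := odd_of_dvd_odd hm₁odd hd
      have hd1 : d = 1 := by
        have hdvd2 : d ∣ 2 * 2 ^ (m.factorization 2) := by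
          rw [← hTfdef, ← hTd]; exact dvd_mul_left d T
        exact (Nat.Coprime.mul_right hdodd.coprime_two_right
          (Nat.Coprime.pow_right _ hdodd.coprime_two_right)).eq_one_of_dvd hdvd2
      have hTd' : T * d = Tf := hTd
      rw [hd1, mul_one] at hTd'
      exact hTd'.symm
    rw [hTfT] at himgm
    have hBm : {d | d ∣ m ∧ Odd d ∧ (T*d)^2 < 2*m} = {d | d ∣ m₁} := by
      apply Set.image_injective.mpr hinj
      rw [← himgm, hevm, hevS]
    have hm₁m : m₁ ∣ m ∧ (T*m₁)^2 < 2*m := by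
      have h : m₁ ∈ {d | d ∣ m ∧ Odd d ∧ (T*d)^2 < 2*m} := by rw [hBm]; exact dvd_refl m₁
      exact ⟨h.1, h.2.2⟩
    obtain ⟨r, hrdef⟩ : ∃ r, r = ordCompl[2] m := ⟨_, rfl⟩
    have hrodd : Odd r := by rw [hrdef]; exact ordCompl_two_odd hm0
    have hrm : 2 ^ (m.factorization 2) * r = m := by
      rw [hrdef]; exact Nat.ordProj_mul_ordCompl_eq_self m 2
    have hrdvdm : r ∣ m := Dvd.intro_left _ hrm
    have h2m : 2 * m = T * r := by rw [← hrm, ← hTfT, hTfdef]; ring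
    have hm₁r : m₁ ∣ r := by rw [hrdef]; exact odd_dvd_ordCompl hm0 hm₁odd hm₁m.1
    obtain ⟨a, har⟩ := hm₁r
    have haodd : Odd a := odd_of_dvd_odd hrodd ⟨m₁, by rw [har]; ring⟩
    have ha0 : 0 < a := haodd.pos
    have hgt : T * m₁ < a := by
      have h1 : (T*m₁) * (T*m₁) < (T*m₁) * a := by
        calc (T*m₁)*(T*m₁) = (T*m₁)^2 := (sq _).symm
        _ < 2 * m := hm₁m.2
        _ = (T*m₁)*a := by rw [h2m, har]; ring
      exact Nat.lt_of_mul_lt_mul_left h1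
    have hstar : ∀ d, d ∣ m₁ * a → d < a → d ∣ m₁ := by
      intro d hdvd hlt
      have hd0 : 0 < d := Nat.pos_of_dvd_of_pos hdvd (by positivity)
      have hdr : d ∣ r := by rw [har]; exact hdvd
      have hdodd : Odd d := odd_of_dvd_odd hrodd hdr
      obtain ⟨d', hdd'⟩ := hdvd
      have hd'odd : Odd d' := odd_of_dvd_odd (hm₁odd.mul haodd) ⟨d, by rw [hdd']; ring⟩
      have hd'0 : 0 < d' := hd'odd.pos
      have hd'gt : m₁ < d' := by
        by_contra hle
        push_neg at hle
        have hcon : m₁ * a < m₁ * a := by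
          calc m₁ * a = d * d' := hdd'
          _ < a * d' := (Nat.mul_lt_mul_right hd'0).mpr hlt
          _ ≤ a * m₁ := Nat.mul_le_mul_left a hle
          _ = m₁ * a := mul_comm a m₁
        exact absurd hcon (lt_irrefl _)
      have hd'r : d' ∣ r := ⟨d, by rw [har, hdd']; ring⟩
      have hd'm : d' ∣ m := dvd_trans hd'r hrdvdm
      have hd'2m : 2*m < d'^2 := by
        have hnotin : ¬ d'^2 < 2*m := by
          intro hlt2
          have hmem : d' ∈ odds (lspec m) := by
            rw [odds_lspec hm0]; exact ⟨hd'odd, hd'm, hlt2⟩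
          rw [hoddm] at hmem
          exact absurd (Nat.le_of_dvd hm₁0 hmem) (not_le.mpr hd'gt)
        have hneq : d'^2 ≠ 2*m := by
          intro heq
          have hoddsq : Odd (d'^2) := hd'odd.pow
          rw [heq, Nat.odd_iff] at hoddsq
          omega
        omega
      have hTd' : T * d < d' := by
        have h1 : (T*d) * d' < d' * d' := by
          calc (T*d)*d' = 2*m := by rw [h2m, har, hdd']; ring
          _ < d'^2 := hd'2m
          _ = d'*d' := sq d'
        exact Nat.lt_of_mul_lt_mul_right h1
      have hsqd : (T*d)^2 < 2*m := by
        calc (T*d)^2 = (T*d)*(T*d) := sq _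
        _ < (T*d)*d' := (Nat.mul_lt_mul_left (by positivity)).mpr hTd'
        _ = 2*m := by rw [h2m, har, hdd']; ring
      have hmem : d ∈ {d | d ∣ m ∧ Odd d ∧ (T*d)^2 < 2*m} :=
        ⟨dvd_trans hdr hrdvdm, hdodd, hsqd⟩
      rw [hBm] at hmem
      exact hmem
    have hmval : 2^(n.factorization 2) * m₁ * a = m := by
      have hTf2 : 2 * 2^(m.factorization 2) = 2 * 2^(n.factorization 2) := by
        rw [← hTfdef, hTfT, hTdef]
      have hpow : 2^(m.factorization 2) = 2^(n.factorization 2) := by omega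
      rw [← hpow, mul_assoc, ← har, hrm]
    by_cases hp : a.Prime
    · exact ⟨a, Or.inl ⟨hp, by rw [hm₀]; exact hgt⟩, by rw [hm₀, hhalf]; exact hmval⟩
    · refine ⟨a, Or.inr ⟨?_, by rw [hm₀]; exact hgt, ?_⟩, by rw [hm₀, hhalf]; exact hmval⟩
      · have ha2 : 2 ≤ a := by omega
        obtain ⟨b, hba, hb2, hblt⟩ := Nat.exists_dvd_of_not_prime2 ha2 hp
        obtain ⟨c, hbc⟩ := hba
        have hc0 : 0 < c := by
          rcases Nat.eq_zero_or_pos c with h | h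
          · rw [h, mul_zero] at hbc; omega
          · exact h
        have hclt : c < a := by
          calc c < 2 * c := by omega
          _ ≤ b * c := Nat.mul_le_mul_right c hb2
          _ = a := hbc.symm
        have hbdvd : b ∣ m₁ :=
          hstar b (dvd_trans (Dvd.intro c hbc.symm) (dvd_mul_left a m₁)) hblt
        have hcdvd : c ∣ m₁ :=
          hstar c (dvd_trans (Dvd.intro_left b hbc.symm) (dvd_mul_left a m₁)) hclt
        exact ⟨b, by rw [hSdiv]; exact hbdvd, c, by rw [hSdiv]; exact hcdvd, hbc⟩
      · rw [← hm₁def, hSdiv]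
        ext d
        simp only [Set.mem_setOf_eq]
        constructor
        · rintro ⟨h1, h2⟩
          exact hstar d h1 h2
        · intro hd
          exact ⟨dvd_trans hd (dvd_mul_right m₁ a),
            lt_of_le_of_lt (le_trans (Nat.le_of_dvd hm₁0 hd) (Nat.le_mul_of_pos_left m₁ hT0)) hgt⟩
  · rintro ⟨a, hPE, rfl⟩
    rw [hm₀, hhalf]
    rcases hPE with hp | hexc
    · obtain ⟨hprime, hgtp⟩ := hp
      rw [hm₀] at hgtp
      have ha0 : 0 < a := hprime.pos
      have haodd : Odd a := hprime.odd_of_ne_two (by omega)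
      have hsmall : ∀ d, d ∣ m₁*a → d^2 < T*(m₁*a) → d ∣ m₁ := by
        intro d hdvd hsq
        by_cases hpd : a ∣ d
        · exfalso
          have hd0 : 0 < d := Nat.pos_of_dvd_of_pos hdvd (by positivity)
          have hda : a ≤ d := Nat.le_of_dvd hd0 hpd
          have hcon : T*(m₁*a) < d^2 := by
            calc T*(m₁*a) = (T*m₁)*a := by ring
            _ < a * a := (Nat.mul_lt_mul_right ha0).mpr hgtp
            _ ≤ d * d := Nat.mul_le_mul hda hda
            _ = d^2 := (sq d).symm
          omega
        · have hcop : d.Coprime a := ((Nat.Prime.coprime_iff_not_dvd hprime).mpr hpd).symm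
          exact hcop.dvd_of_dvd_mul_right hdvd
      exact ⟨by positivity, by
        rw [mul_assoc]
        exact lspec_eq_aux hTdef hm₁odd hm₁0 haodd ha0 hgtp hsmall hSdiv hevS⟩
    · obtain ⟨⟨b, hbmem, c, hcmem, habc⟩, hgta, hdiveq⟩ := hexc
      rw [hm₀] at hgta
      rw [← hm₁def, hSdiv] at hdiveq
      have hbodd : Odd b := hbmem.2
      have hcodd : Odd c := hcmem.2
      have haodd : Odd a := by rw [habc]; exact hbodd.mul hcodd
      have ha0 : 0 < a := haodd.pos
      have hsmall : ∀ d, d ∣ m₁*a → d^2 < T*(m₁*a) → d ∣ m₁ := by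
        intro d hdvd hsq
        by_cases hlt : d < a
        · have hmem : d ∈ {d | d ∣ m₁ * a ∧ d < a} := ⟨hdvd, hlt⟩
          rw [hdiveq] at hmem
          exact hmem
        · exfalso
          push_neg at hlt
          have hcon : T*(m₁*a) < d^2 := by
            calc T*(m₁*a) = (T*m₁)*a := by ring
            _ < a*a := (Nat.mul_lt_mul_right ha0).mpr hgta
            _ ≤ d*d := Nat.mul_le_mul hlt hlt
            _ = d^2 := (sq d).symm
          omega
      exact ⟨by positivity, by
        rw [mul_assoc]
        exact lspec_eq_aux hTdef hm₁odd hm₁0 haodd ha0 hgta hsmall hSdiv hevS⟩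
end
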